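/- arXiv:1809.02580 — 3 statements merged into one kernel-verified Lean document; each statement's English description precedes it below -/
import Mathlib

section
/- Let M be a nonempty compact smooth manifold without boundary (finite-dimensional, modelled on a real normed space), let V be a vector field on M (an assignment x ↦ V(x) ∈ T_xM), let β : M → ℝ be a function with β(x) ≠ 0 for every x ∈ M, and let f : M → ℝ be differentiable (MDifferentiable). If for every x ∈ M the derivative of f at x in the direction V(x) satisfies (df)_x(V(x)) + β(x)·f(x) = 0, then f is identically zero on M. -/
open Manifold Set

/-- Without boundary, `range I` is a neighbourhood of every chart point, so the manifold
derivative is an ordinary Fréchet derivative in the chart, where Fermat's theorem applies. -/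
theorem IsLocalExtr.mfderiv_eq_zero
    {E : Type*} [NormedAddCommGroup E] [NormedSpace ℝ E]
    {H : Type*} [TopologicalSpace H] (I : ModelWithCorners ℝ E H)
    {M : Type*} [TopologicalSpace M] [ChartedSpace H M] [BoundarylessManifold I M]
    {f : M → ℝ} {x : M} (hextr : IsLocalExtr f x) : mfderiv I 𝓘(ℝ) f x = 0 := by
  by_cases hf : MDifferentiableAt I 𝓘(ℝ) f x
  · have hchart : IsLocalExtr (writtenInExtChartAt I 𝓘(ℝ) x f) (extChartAt I x x) := by
      rw [← extChartAt_to_inv (I := I) x] at hextr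
      exact hextr.comp_continuous (continuousAt_extChartAt_symm x)
    rw [hf.mfderiv, fderivWithin_of_mem_nhds
      (range_mem_nhds_isInteriorPoint (BoundarylessManifold.isInteriorPoint (I := I)))]
    exact hchart.fderiv_eq_zero
  · exact mfderiv_zero_of_not_mdifferentiableAt hf

theorem Continuous.eq_zero_of_forall_isLocalExtr
    {X : Type*} [TopologicalSpace X] [CompactSpace X] [Nonempty X]
    {f : X → ℝ} (hf : Continuous f) (h : ∀ y, IsLocalExtr f y → f y = 0) (x : X) :
    f x = 0 := by
  obtain ⟨a, -, ha⟩ := isCompact_univ.exists_isMaxOn univ_nonempty hf.continuousOn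
  obtain ⟨b, -, hb⟩ := isCompact_univ.exists_isMinOn univ_nonempty hf.continuousOn
  have hfa : f a = 0 := h a (ha.isLocalMax Filter.univ_mem).isExtr
  have hfb : f b = 0 := h b (hb.isLocalMin Filter.univ_mem).isExtr
  exact le_antisymm (hfa ▸ ha (mem_univ x)) (hfb ▸ hb (mem_univ x))

theorem scalar_max_principle_general
    {E : Type*} [NormedAddCommGroup E] [NormedSpace ℝ E]
    {H : Type*} [TopologicalSpace H] (I : ModelWithCorners ℝ E H)
    {M : Type*} [TopologicalSpace M] [ChartedSpace H M]
    [BoundarylessManifold I M]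
    [CompactSpace M] [Nonempty M]
    (V : (x : M) → TangentSpace I x)
    (β : M → ℝ) (hβ : ∀ x : M, β x ≠ 0)
    (f : M → ℝ) (hf : MDifferentiable I 𝓘(ℝ) f)
    (hode : ∀ x : M, (show ℝ from mfderiv I 𝓘(ℝ) f x (V x)) + β x * f x = 0) :
    ∀ x : M, f x = 0 := by
  refine hf.continuous.eq_zero_of_forall_isLocalExtr fun y hy => ?_
  have hdf : (show ℝ from mfderiv I 𝓘(ℝ) f y (V y)) = 0 := by rw [hy.mfderiv_eq_zero I]; rfl
  have hode_y : β y * f y = 0 := by rw [← hode y, hdf, zero_add]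
  exact (mul_eq_zero.mp hode_y).resolve_left (hβ y)

/-- scalar global maximum principle on a compact boundaryless manifold:
if `f` is differentiable on a nonempty compact smooth manifold `M` without boundary and
satisfies `df_x(V x) + β x * f x = 0` with `β` nowhere vanishing, then `f ≡ 0`. -/
theorem scalar_max_principle
    {E : Type*} [NormedAddCommGroup E] [NormedSpace ℝ E] [FiniteDimensional ℝ E]
    {H : Type*} [TopologicalSpace H] (I : ModelWithCorners ℝ E H)
    {M : Type*} [TopologicalSpace M] [ChartedSpace H M]
    [IsManifold I (⊤ : ℕ∞) M] [BoundarylessManifold I M]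
    [CompactSpace M] [Nonempty M]
    (V : (x : M) → TangentSpace I x)
    (β : M → ℝ) (hβ : ∀ x : M, β x ≠ 0)
    (f : M → ℝ) (hf : MDifferentiable I 𝓘(ℝ) f)
    (hode : ∀ x : M, (show ℝ from mfderiv I 𝓘(ℝ) f x (V x)) + β x * f x = 0) :
    ∀ x : M, f x = 0 :=
  scalar_max_principle_general I V β hβ f hf hode
end

section
/- Let M be a compact smooth manifold without boundary (finite-dimensional, modelled on a real normed space), let V be a vector field on M, let β : M → ℝ be a function with β(x) ≠ 0 for every x ∈ M, let m ≥ 1, let C : M → Mat_{m×m}(ℝ) satisfy C(x)ᵀ = −C(x) for every x (pointwise skew-symmetric), and let A : M → Mat_{m×m}(ℝ) be differentiable with A(x)ᵀ = A(x) for every x (pointwise symmetric). Suppose that for every x ∈ M the directional derivative of A along V satisfies (dA)_x(V(x)) = −β(x)·A(x) + C(x)ᵀ·A(x) + A(x)·C(x). Then A is identically the zero matrix on M. -/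
/-! The differential of `f = ∑ i j, A i j ^ 2` along `V` is `-2 β f`: the remaining terms
`∑ A (Cᵀ A + A C)` pair the symmetric matrices `A Aᵀ` and `Aᵀ A` with the skew matrix `C`,
so they vanish. At a maximum point of `f` on the compact boundaryless manifold the differential
is zero, hence `β f = 0` there; as `β ≠ 0`, the maximum of `f ≥ 0` is `0` and `A ≡ 0`. -/

open Manifold

section MatrixAlgebra

variable {n : Type*} [Fintype n]

theorem sum_sum_mul_eq_zero_of_symm_of_skew (S C : n → n → ℝ) (hS : ∀ i j, S j i = S i j)
    (hC : ∀ i j, C j i = -C i j) : ∑ i, ∑ j, S i j * C i j = 0 := by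
  have hneg : ∑ i, ∑ j, S i j * C i j = -∑ i, ∑ j, S i j * C i j := calc
    ∑ i, ∑ j, S i j * C i j = ∑ i, ∑ j, -(S j i * C j i) :=
      Finset.sum_congr rfl fun i _ => Finset.sum_congr rfl fun j _ => by
        rw [hS j i, hC j i, mul_neg]
    _ = -∑ j, ∑ i, S j i * C j i := by rw [Finset.sum_comm]; simp only [Finset.sum_neg_distrib]
  linarith

theorem sum_sum_mul_transpose_mul_add_mul_eq_zero_of_skew (A C : n → n → ℝ)
    (hC : ∀ i j, C j i = -C i j) :
    ∑ i, ∑ j, A i j * ((∑ k, C k i * A k j) + ∑ k, A i k * C k j) = 0 := by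
  have hleft : ∑ i, ∑ j, A i j * ∑ k, C k i * A k j
      = ∑ i, ∑ k, (∑ j, A i j * A k j) * C k i := by
    simp only [Finset.mul_sum, Finset.sum_mul]
    refine Finset.sum_congr rfl fun i _ => Finset.sum_comm.trans ?_
    exact Finset.sum_congr rfl fun k _ => Finset.sum_congr rfl fun j _ => by ring
  have hright : ∑ i, ∑ j, A i j * ∑ k, A i k * C k j
      = ∑ j, ∑ k, (∑ i, A i j * A i k) * C k j := by
    simp only [Finset.mul_sum, Finset.sum_mul]
    rw [Finset.sum_comm]
    refine Finset.sum_congr rfl fun j _ => Finset.sum_comm.trans ?_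
    exact Finset.sum_congr rfl fun k _ => Finset.sum_congr rfl fun i _ => by ring
  simp only [mul_add, Finset.sum_add_distrib, hleft, hright]
  rw [sum_sum_mul_eq_zero_of_symm_of_skew _ (fun i k => C k i) (fun i k => ?_)
      (fun i k => hC k i),
    sum_sum_mul_eq_zero_of_symm_of_skew _ (fun j k => C k j) (fun j k => ?_)
      (fun j k => hC k j),
    add_zero]
  · exact Finset.sum_congr rfl fun j _ => mul_comm _ _
  · exact Finset.sum_congr rfl fun i _ => mul_comm _ _

theorem sum_sum_two_mul_eq_of_skew (A C W : n → n → ℝ) (b : ℝ) (hC : ∀ i j, C j i = -C i j)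
    (hW : ∀ i j, W i j = -b * A i j + (∑ k, C k i * A k j) + ∑ k, A i k * C k j) :
    ∑ i, ∑ j, 2 * A i j * W i j = -2 * b * ∑ i, ∑ j, A i j ^ 2 := by
  have hsplit : ∀ i j, 2 * A i j * W i j
      = -2 * b * A i j ^ 2 + 2 * (A i j * ((∑ k, C k i * A k j) + ∑ k, A i k * C k j)) :=
    fun i j => by rw [hW]; ring
  simp only [hsplit, Finset.sum_add_distrib, ← Finset.mul_sum,
    sum_sum_mul_transpose_mul_add_mul_eq_zero_of_skew A C hC, mul_zero, add_zero]

theorem eq_zero_of_sum_sum_sq_eq_zero {N : n → n → ℝ} (h : ∑ i, ∑ j, N i j ^ 2 = 0) (i j : n) :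
    N i j = 0 := by
  have hrow :=
    (Finset.sum_eq_zero_iff_of_nonneg fun i _ => by positivity).1 h i (Finset.mem_univ i)
  exact pow_eq_zero_iff two_ne_zero |>.1 <|
    (Finset.sum_eq_zero_iff_of_nonneg fun j _ => by positivity).1 hrow j (Finset.mem_univ j)

end MatrixAlgebra

section Calculus

variable {n : Type*}

noncomputable def entryCLM (i j : n) : (n → n → ℝ) →L[ℝ] ℝ :=
  ContinuousLinearMap.proj j ∘L ContinuousLinearMap.proj i

@[simp] theorem entryCLM_apply (i j : n) (N : n → n → ℝ) : entryCLM i j N = N i j := rfl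

variable [Fintype n]

theorem sum_sum_smul_entryCLM_apply (P W : n → n → ℝ) :
    (∑ i, ∑ j, P i j • entryCLM i j) W = ∑ i, ∑ j, P i j * W i j := by
  simp

theorem hasFDerivAt_sum_sum_sq (P : n → n → ℝ) :
    HasFDerivAt (fun N : n → n → ℝ => ∑ i, ∑ j, N i j ^ 2)
      (∑ i, ∑ j, (2 * P i j) • entryCLM i j) P := by
  refine HasFDerivAt.fun_sum fun i _ => HasFDerivAt.fun_sum fun j _ => ?_
  simpa [mul_comm] using ((entryCLM i j).hasFDerivAt (x := P)).pow 2

variable {E : Type*} [NormedAddCommGroup E] [NormedSpace ℝ E]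
  {H : Type*} [TopologicalSpace H] {I : ModelWithCorners ℝ E H}
  {M : Type*} [TopologicalSpace M] [ChartedSpace H M]

theorem hasMFDerivAt_sum_sum_sq {A : M → n → n → ℝ} {x : M}
    (hA : MDifferentiableAt I 𝓘(ℝ, n → n → ℝ) A x) :
    HasMFDerivAt I 𝓘(ℝ, ℝ) (fun y => ∑ i, ∑ j, A y i j ^ 2) x
      ((∑ i, ∑ j, (2 * A x i j) • entryCLM i j) ∘L mfderiv I 𝓘(ℝ, n → n → ℝ) A x) :=
  (hasFDerivAt_sum_sum_sq (A x)).hasMFDerivAt.comp x hA.hasMFDerivAt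

theorem mfderiv_sum_sum_sq_apply {A : M → n → n → ℝ} {x : M}
    (hA : MDifferentiableAt I 𝓘(ℝ, n → n → ℝ) A x) (v : TangentSpace I x) :
    mfderiv I 𝓘(ℝ, ℝ) (fun y => ∑ i, ∑ j, A y i j ^ 2) x v
      = ∑ i, ∑ j, 2 * A x i j * mfderiv I 𝓘(ℝ, n → n → ℝ) A x v i j := by
  rw [(hasMFDerivAt_sum_sum_sq hA).mfderiv]
  exact sum_sum_smul_entryCLM_apply _ _

theorem mfderiv_eq_zero_of_isMaxOn_univ [BoundarylessManifold I M] {f : M → ℝ} {x : M}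
    (hf : MDifferentiableAt I 𝓘(ℝ, ℝ) f x) (hmax : IsMaxOn f Set.univ x) :
    mfderiv I 𝓘(ℝ, ℝ) f x = 0 := by
  set g : E → ℝ := writtenInExtChartAt I 𝓘(ℝ, ℝ) x f with hg
  have hgmax : IsLocalMax g (extChartAt I x x) := Filter.Eventually.of_forall fun y => by
    simpa [hg, writtenInExtChartAt, extChartAt_model_space_eq_id, chartAt_self_eq]
      using hmax (Set.mem_univ _)
  have hrange : Set.range I ∈ nhds (extChartAt I x x) :=
    range_mem_nhds_isInteriorPoint BoundarylessManifold.isInteriorPoint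
  rw [hf.mfderiv, ← hg, fderivWithin_of_mem_nhds hrange, hgmax.fderiv_eq_zero]
  rfl

end Calculus

theorem matrix_max_principle_general
    {E : Type*} [NormedAddCommGroup E] [NormedSpace ℝ E]
    {H : Type*} [TopologicalSpace H] (I : ModelWithCorners ℝ E H)
    {M : Type*} [TopologicalSpace M] [ChartedSpace H M]
    [BoundarylessManifold I M] [CompactSpace M]
    (V : (x : M) → TangentSpace I x)
    (β : M → ℝ) (hβ : ∀ x : M, β x ≠ 0)
    (m : ℕ)
    (C : M → Fin m → Fin m → ℝ)
    (hC_skew : ∀ (x : M) (i j : Fin m), C x j i = - C x i j)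
    (A : M → Fin m → Fin m → ℝ)
    (hA_diff : MDifferentiable I 𝓘(ℝ, Fin m → Fin m → ℝ) A)
    (hode : ∀ (x : M) (i j : Fin m),
      (show Fin m → Fin m → ℝ from
          mfderiv I 𝓘(ℝ, Fin m → Fin m → ℝ) A x (V x)) i j =
        - β x * A x i j + (∑ k, C x k i * A x k j) + ∑ k, A x i k * C x k j) :
    ∀ (x : M) (i j : Fin m), A x i j = 0 := by
  intro x
  set f : M → ℝ := fun y => ∑ i, ∑ j, A y i j ^ 2
  have hf : ∀ y, HasMFDerivAt I 𝓘(ℝ, ℝ) f y _ := fun y => hasMFDerivAt_sum_sum_sq (hA_diff y)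
  obtain ⟨z, -, hz⟩ := isCompact_univ.exists_isMaxOn ⟨x, Set.mem_univ x⟩
    (continuous_iff_continuousAt.2 fun y => (hf y).continuousAt).continuousOn
  have hflow : mfderiv I 𝓘(ℝ, ℝ) f z (V z) = -2 * β z * f z := by
    rw [mfderiv_sum_sum_sq_apply (hA_diff z)]
    exact sum_sum_two_mul_eq_of_skew (A z) (C z) _ (β z) (hC_skew z) (hode z)
  have hfz : f z = 0 := by
    rw [mfderiv_eq_zero_of_isMaxOn_univ (hf z).mdifferentiableAt hz, zero_apply] at hflow
    exact (mul_eq_zero.1 hflow.symm).resolve_left (mul_ne_zero (by norm_num) (hβ z))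
  exact eq_zero_of_sum_sum_sq_eq_zero <|
    le_antisymm (hfz ▸ hz (Set.mem_univ x)) (by positivity)

/-- matrix form of the global maximum principle, Lemma 2.6 of the paper:
on a compact boundaryless manifold `M`, if the pointwise symmetric matrix-valued map `A`
(representing a symmetric 2-tensor in a local orthonormal frame) satisfies the ODE
`(dA)_x(V x) = -β x • A x + (C x)ᵀ * A x + A x * C x` along a vector field `V`,
where `β` is nowhere vanishing and `C` is pointwise skew-symmetric, then `A ≡ 0`.
Matrices are represented as elements of the (finite-dimensional normed space)
`Fin m → Fin m → ℝ`, with products written out explicitly. -/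
theorem matrix_max_principle
    {E : Type*} [NormedAddCommGroup E] [NormedSpace ℝ E] [FiniteDimensional ℝ E]
    {H : Type*} [TopologicalSpace H] (I : ModelWithCorners ℝ E H)
    {M : Type*} [TopologicalSpace M] [ChartedSpace H M]
    [IsManifold I (⊤ : ℕ∞) M] [BoundarylessManifold I M] [CompactSpace M]
    (V : (x : M) → TangentSpace I x)
    (β : M → ℝ) (hβ : ∀ x : M, β x ≠ 0)
    (m : ℕ) (hm : 1 ≤ m)
    (C : M → Fin m → Fin m → ℝ)
    (hC_skew : ∀ (x : M) (i j : Fin m), C x j i = - C x i j)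
    (A : M → Fin m → Fin m → ℝ)
    (hA_diff : MDifferentiable I 𝓘(ℝ, Fin m → Fin m → ℝ) A)
    (hA_symm : ∀ (x : M) (i j : Fin m), A x j i = A x i j)
    (hode : ∀ (x : M) (i j : Fin m),
      (show Fin m → Fin m → ℝ from
          mfderiv I 𝓘(ℝ, Fin m → Fin m → ℝ) A x (V x)) i j =
        - β x * A x i j + (∑ k, C x k i * A x k j) + ∑ k, A x i k * C x k j) :
    ∀ (x : M) (i j : Fin m), A x i j = 0 :=
  matrix_max_principle_general I V β hβ m C hC_skew A hA_diff hode
end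

section
/- With the coordinate conventions below, for every smooth vector field V on U and all indices a, b: (ℒ_V Ric)_{ab} = (∇_e R_{ab} − ∇_a R_{be} − ∇_b R_{ae})·V^e + (ℒ_{Ric♯(V)♯} g)_{ab}, at every point of U, where (ℒ_{Ric♯(V)♯} g)_{ab} := ∇_a (Ric♯(V))_b + ∇_b (Ric♯(V))_a. (This is identity (A.5)/(eq: LRab) in the appendix of the paper, an intermediate step in the proof of the key wave-equation identity for ℒ_V g.) -/
open scoped ContDiff

noncomputable section CoordinateGeometry

/-- The partial derivative `∂_a f` of a scalar function `f` on `ℝⁿ` in the `a`-th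
coordinate direction. -/
def pd {n : ℕ} (a : Fin n) (f : (Fin n → ℝ) → ℝ) (x : Fin n → ℝ) : ℝ :=
  fderiv ℝ f x (Pi.single a 1)

variable {n : ℕ} (g : (Fin n → ℝ) → Fin n → Fin n → ℝ)

/-- The entries `g^{ab}` of the pointwise inverse matrix of the metric `g_{ab}`. -/
def ginv (x : Fin n → ℝ) (a b : Fin n) : ℝ :=
  (Matrix.of (g x))⁻¹ a b

/-- The Christoffel symbols
`Γ^c_{ab} = ½ g^{cd}(∂_a g_{bd} + ∂_b g_{ad} − ∂_d g_{ab})`. -/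
def Γ' (c a b : Fin n) (x : Fin n → ℝ) : ℝ :=
  (1 / 2) * ∑ d, ginv g x c d *
    (pd a (fun y => g y b d) x + pd b (fun y => g y a d) x - pd d (fun y => g y a b) x)

/-- The covariant derivative `∇_a ω_b = ∂_a ω_b − Γ^c_{ab} ω_c` of a one-form. -/
def cd1 (w : Fin n → (Fin n → ℝ) → ℝ) (a b : Fin n) (x : Fin n → ℝ) : ℝ :=
  pd a (w b) x - ∑ c, Γ' g c a b x * w c x

/-- The covariant derivative `∇_a u_{bc} = ∂_a u_{bc} − Γ^d_{ab} u_{dc} − Γ^d_{ac} u_{bd}`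
of a covariant 2-tensor. -/
def cd2 (u : Fin n → Fin n → (Fin n → ℝ) → ℝ) (a b c : Fin n) (x : Fin n → ℝ) : ℝ :=
  pd a (u b c) x - ∑ d, Γ' g d a b x * u d c x - ∑ d, Γ' g d a c x * u b d x

/-- The covariant derivative of a covariant 3-tensor. -/
def cd3 (u : Fin n → Fin n → Fin n → (Fin n → ℝ) → ℝ) (a b c d : Fin n)
    (x : Fin n → ℝ) : ℝ :=
  pd a (u b c d) x - ∑ e, Γ' g e a b x * u e c d x
    - ∑ e, Γ' g e a c x * u b e d x - ∑ e, Γ' g e a d x * u b c e x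

/-- The Riemann curvature tensor `R_{abc}{}^d`, characterised by
`∇_a ∇_b ω_c − ∇_b ∇_a ω_c = R_{abc}{}^d ω_d` for every smooth one-form `ω`; in
coordinates `R_{abc}{}^d = ∂_b Γ^d_{ac} − ∂_a Γ^d_{bc} + Γ^e_{ac} Γ^d_{be} − Γ^e_{bc} Γ^d_{ae}`. -/
def Riem (a b c d : Fin n) (x : Fin n → ℝ) : ℝ :=
  pd b (Γ' g d a c) x - pd a (Γ' g d b c) x
    + ∑ e, Γ' g e a c x * Γ' g d b e x - ∑ e, Γ' g e b c x * Γ' g d a e x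

/-- The Ricci tensor `R_{ac} := R_{abc}{}^b`. -/
def Ricci (a c : Fin n) (x : Fin n → ℝ) : ℝ :=
  ∑ b, Riem g a b c b x

/-- The Ricci tensor with second index raised, `R_a{}^b := g^{bd} R_{ad}`. -/
def RicciUp (a b : Fin n) (x : Fin n → ℝ) : ℝ :=
  ∑ d, ginv g x b d * Ricci g a d x

/-- The lowered components `V_a := g_{ab} V^b` of a vector field. -/
def low (V : Fin n → (Fin n → ℝ) → ℝ) (a : Fin n) (x : Fin n → ℝ) : ℝ :=
  ∑ b, g x a b * V b x

/-- The Lie derivative of the metric, `(ℒ_V g)_{ab} := ∇_a V_b + ∇_b V_a`. -/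
def lieG (V : Fin n → (Fin n → ℝ) → ℝ) (a b : Fin n) (x : Fin n → ℝ) : ℝ :=
  cd1 g (low g V) a b x + cd1 g (low g V) b a x

/-- The divergence `div(V) := ∇_a V^a = ∂_a V^a + Γ^a_{ac} V^c`. -/
def divV (V : Fin n → (Fin n → ℝ) → ℝ) (x : Fin n → ℝ) : ℝ :=
  ∑ a, (pd a (V a) x + ∑ c, Γ' g a a c x * V c x)

/-- The wave operator on a vector field (as a one-form),
`(□V)_a := −g^{cd} ∇_c ∇_d V_a`. -/
def boxV (V : Fin n → (Fin n → ℝ) → ℝ) (a : Fin n) (x : Fin n → ℝ) : ℝ :=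
  - ∑ c, ∑ d, ginv g x c d * cd2 g (fun d a => cd1 g (low g V) d a) c d a x

/-- The divergence `(div u)_b := g^{ac} ∇_a u_{cb}` of a covariant 2-tensor. -/
def divT (u : Fin n → Fin n → (Fin n → ℝ) → ℝ) (b : Fin n) (x : Fin n → ℝ) : ℝ :=
  ∑ a, ∑ c, ginv g x a c * cd2 g u a c b x

/-- `(Ric♯(V))_a := R_a{}^b V_b`. -/
def ricSharp (V : Fin n → (Fin n → ℝ) → ℝ) (a : Fin n) (x : Fin n → ℝ) : ℝ :=
  ∑ b, RicciUp g a b x * low g V b x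

/-- The wave operator on a covariant 2-tensor, `(□u)_{ab} := −g^{cd} ∇_c ∇_d u_{ab}`. -/
def boxT (u : Fin n → Fin n → (Fin n → ℝ) → ℝ) (a b : Fin n) (x : Fin n → ℝ) : ℝ :=
  - ∑ c, ∑ d, ginv g x c d * cd3 g (fun c d e => cd2 g u c d e) c d a b x

/-- `Riem(u)_{ab} := R_a{}^c{}_b{}^d u_{cd} = g^{ce} R_{aeb}{}^d u_{cd}`. -/
def riemOf (u : Fin n → Fin n → (Fin n → ℝ) → ℝ) (a b : Fin n) (x : Fin n → ℝ) : ℝ :=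
  ∑ c, ∑ d, ∑ e, ginv g x c e * Riem g a e b d x * u c d x

/-- `(ℒ_{ω♯} g)_{ab} := ∇_a ω_b + ∇_b ω_a` for a one-form `ω`. -/
def lieSharpG (w : Fin n → (Fin n → ℝ) → ℝ) (a b : Fin n) (x : Fin n → ℝ) : ℝ :=
  cd1 g w a b x + cd1 g w b a x

/-- `(ℒ_V Ric)_{ab} := V^c ∂_c R_{ab} + R_{cb} ∂_a V^c + R_{ac} ∂_b V^c`. -/
def lieRic (V : Fin n → (Fin n → ℝ) → ℝ) (a b : Fin n) (x : Fin n → ℝ) : ℝ :=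
  ∑ c, V c x * pd c (Ricci g a b) x
    + ∑ c, Ricci g c b x * pd a (V c) x
    + ∑ c, Ricci g a c x * pd b (V c) x

/-- The covariant derivative `∇_f R_{eab}{}^c` of the Riemann `(3,1)`-tensor. -/
def cdRiem (f e a b c : Fin n) (x : Fin n → ℝ) : ℝ :=
  pd f (Riem g e a b c) x
    - ∑ d, Γ' g d f e x * Riem g d a b c x
    - ∑ d, Γ' g d f a x * Riem g e d b c x
    - ∑ d, Γ' g d f b x * Riem g e a d c x
    + ∑ d, Γ' g c f d x * Riem g e a b d x

end CoordinateGeometry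

/-!
Put `W_b := R_{bd} V^d`; since `g_{eb} g^{bd} = δ_e^d`, this is `Ric♯(V)_b`. The Leibniz rule gives
`∇_a W_b = (∇_a R_{bd}) V^d + R_{bd} ∇_a V^d`, so once `R_{bd} = R_{db}` is known the right-hand
side collapses to `V^e ∇_e R_{ab} + R_{cb} ∇_a V^c + R_{ac} ∇_b V^c`, with `∇_a V^c` the covariant
derivative of `V`. As `Γ^c_{ab}` is symmetric in `a, b`, the Christoffel terms of this expression
cancel, and what is left is the coordinate expression `(ℒ_V Ric)_{ab}`.

By the symmetry of `Γ`, the symmetry of the Ricci tensor comes down to that of `∂_a Γ^b_{bc}` in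
`a, c`. Now `Γ^b_{bc} = ½ g^{bd} ∂_c g_{bd}`, whose derivative
`∂_a Γ^b_{bc} = -½ tr(g⁻¹ ∂_a g g⁻¹ ∂_c g) + ½ g^{bd} ∂_a ∂_c g_{bd}` is symmetric by the
cyclicity of the trace and Schwarz's theorem.
-/

open Finset

section PartialDerivatives

variable {n : ℕ} {U : Set (Fin n → ℝ)} {f h : (Fin n → ℝ) → ℝ} {x : Fin n → ℝ}

theorem ContDiffOn.differentiableAt_of_isOpen (hf : ContDiffOn ℝ ∞ f U) (hU : IsOpen U)
    (hx : x ∈ U) : DifferentiableAt ℝ f x :=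
  (hf.differentiableOn (by simp)).differentiableAt (hU.mem_nhds hx)

theorem pd_congr_of_eqOn (hU : IsOpen U) (hfh : Set.EqOn f h U) (hx : x ∈ U) (a : Fin n) :
    pd a f x = pd a h x := by
  rw [pd, pd, (Filter.eventuallyEq_of_mem (hU.mem_nhds hx) hfh).fderiv_eq]

theorem pd_const (c : ℝ) (a : Fin n) : pd a (fun _ => c) x = 0 := by
  simp [pd]

theorem pd_const_mul (c : ℝ) (hf : DifferentiableAt ℝ f x) (a : Fin n) :
    pd a (fun y => c * f y) x = c * pd a f x := by
  rw [pd, fderiv_const_mul hf]; rfl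

theorem pd_mul (hf : DifferentiableAt ℝ f x) (hh : DifferentiableAt ℝ h x) (a : Fin n) :
    pd a (fun y => f y * h y) x = pd a f x * h x + f x * pd a h x := by
  rw [pd, fderiv_fun_mul hf hh]; simp [pd]; ring

theorem pd_sum {ι : Type*} (s : Finset ι) (F : ι → (Fin n → ℝ) → ℝ)
    (hF : ∀ i ∈ s, DifferentiableAt ℝ (F i) x) (a : Fin n) :
    pd a (fun y => ∑ i ∈ s, F i y) x = ∑ i ∈ s, pd a (F i) x := by
  simp [pd, fderiv_fun_sum hF]

theorem contDiffOn_pd (hU : IsOpen U) (hf : ContDiffOn ℝ ∞ f U) (a : Fin n) :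
    ContDiffOn ℝ ∞ (pd a f) U :=
  ((hf.fderivWithin hU.uniqueDiffOn (by simp)).clm_apply contDiffOn_const).congr
    fun y hy => by rw [pd, fderivWithin_of_isOpen hU hy]

theorem pd_pd_comm (hU : IsOpen U) (hf : ContDiffOn ℝ ∞ f U) (hx : x ∈ U) (a c : Fin n) :
    pd a (pd c f) x = pd c (pd a f) x := by
  have hfx : ContDiffAt ℝ ∞ f x := hf.contDiffAt (hU.mem_nhds hx)
  have hsymm := hfx.isSymmSndFDerivAt (by
    simp only [minSmoothness_of_isRCLikeNormedField]; exact WithTop.coe_le_coe.mpr le_top)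
  have hd : DifferentiableAt ℝ (fderiv ℝ f) x :=
    (hfx.fderiv_right (m := ∞) (by simp)).differentiableAt (by simp)
  have pd_pd : ∀ v w : Fin n → ℝ,
      fderiv ℝ (fun y => fderiv ℝ f y w) x v = fderiv ℝ (fderiv ℝ f) x v w := fun v w => by
    simp [fderiv_clm_apply hd (differentiableAt_const w)]
  unfold pd
  rw [pd_pd, pd_pd, hsymm]

end PartialDerivatives

section InverseMetric

variable {n : ℕ} {U : Set (Fin n → ℝ)} {g : (Fin n → ℝ) → Fin n → Fin n → ℝ} {x : Fin n → ℝ}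

theorem sum_ginv_mul (hdet : IsUnit (Matrix.of (g x)).det) (a b : Fin n) :
    ∑ c, ginv g x a c * g x c b = if a = b then 1 else 0 := by
  simpa [ginv, Matrix.mul_apply, Matrix.one_apply] using
    congrFun₂ (Matrix.nonsing_inv_mul (Matrix.of (g x)) hdet) a b

theorem sum_mul_ginv (hdet : IsUnit (Matrix.of (g x)).det) (a b : Fin n) :
    ∑ c, g x a c * ginv g x c b = if a = b then 1 else 0 := by
  simpa [ginv, Matrix.mul_apply, Matrix.one_apply] using
    congrFun₂ (Matrix.mul_nonsing_inv (Matrix.of (g x)) hdet) a b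

theorem ginv_symm (hsymm : ∀ a b, g x a b = g x b a) (a b : Fin n) :
    ginv g x a b = ginv g x b a := by
  have hT : (Matrix.of (g x)).transpose = Matrix.of (g x) := by ext i j; exact hsymm j i
  simpa [ginv, hT] using (congrFun₂ (Matrix.transpose_nonsing_inv (Matrix.of (g x))) a b).symm

theorem contDiffOn_det (M : (Fin n → ℝ) → Matrix (Fin n) (Fin n) ℝ)
    (hM : ∀ a b, ContDiffOn ℝ ∞ (fun y => M y a b) U) :
    ContDiffOn ℝ ∞ (fun y => (M y).det) U := by
  simp only [Matrix.det_apply, Units.smul_def, zsmul_eq_mul]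
  exact ContDiffOn.sum fun σ _ => contDiffOn_const.mul (contDiffOn_prod fun i _ => hM (σ i) i)

theorem contDiffOn_ginv (hg_smooth : ∀ a b, ContDiffOn ℝ ∞ (fun y => g y a b) U)
    (hg_inv : ∀ y ∈ U, IsUnit (Matrix.of (g y)).det) (a b : Fin n) :
    ContDiffOn ℝ ∞ (fun y => ginv g y a b) U := by
  have hadj : ContDiffOn ℝ ∞ (fun y => (Matrix.of (g y)).adjugate a b) U := by
    simp only [Matrix.adjugate_apply]
    refine contDiffOn_det _ fun c d => ?_
    by_cases hc : c = b
    · simp only [hc, Matrix.updateRow_self]; exact contDiffOn_const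
    · simp only [Matrix.updateRow_ne hc]; exact hg_smooth c d
  have hginv : ∀ y, ginv g y a b = (Matrix.of (g y)).det⁻¹ * (Matrix.of (g y)).adjugate a b := by
    simp [ginv, Matrix.inv_def, Ring.inverse_eq_inv']
  simp only [hginv]
  exact ((contDiffOn_det _ hg_smooth).inv fun y hy => (hg_inv y hy).ne_zero).mul hadj

end InverseMetric

section Curvature

variable {n : ℕ} {U : Set (Fin n → ℝ)} {g : (Fin n → ℝ) → Fin n → Fin n → ℝ} {x : Fin n → ℝ}

theorem pd_ginv (hU : IsOpen U) (hg_smooth : ∀ a b, ContDiffOn ℝ ∞ (fun y => g y a b) U)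
    (hg_inv : ∀ y ∈ U, IsUnit (Matrix.of (g y)).det) (hx : x ∈ U) (e a b : Fin n) :
    pd e (fun y => ginv g y a b) x
      = -∑ p, ∑ q, ginv g x a p * pd e (fun y => g y p q) x * ginv g x q b := by
  have dg : ∀ p q, DifferentiableAt ℝ (fun y => g y p q) x :=
    fun p q => (hg_smooth p q).differentiableAt_of_isOpen hU hx
  have dginv : ∀ p q, DifferentiableAt ℝ (fun y => ginv g y p q) x :=
    fun p q => (contDiffOn_ginv hg_smooth hg_inv p q).differentiableAt_of_isOpen hU hx
  have hleibniz : ∀ q, ∑ p, pd e (fun y => ginv g y a p) x * g x p q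
      = -∑ p, ginv g x a p * pd e (fun y => g y p q) x := by
    intro q
    have hδ := pd_congr_of_eqOn hU (fun y hy => sum_ginv_mul (hg_inv y hy) a q) hx e
    rw [pd_const, pd_sum _ _ fun p _ => (dginv a p).fun_mul (dg p q)] at hδ
    simp only [pd_mul (dginv a _) (dg _ q), sum_add_distrib] at hδ
    linarith
  calc pd e (fun y => ginv g y a b) x
      = ∑ p, pd e (fun y => ginv g y a p) x * ∑ q, g x p q * ginv g x q b := by
        simp [sum_mul_ginv (hg_inv x hx)]
    _ = ∑ q, (∑ p, pd e (fun y => ginv g y a p) x * g x p q) * ginv g x q b := by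
        simp only [mul_sum, sum_mul, mul_assoc]; exact sum_comm
    _ = _ := by
        simp only [hleibniz, neg_mul, sum_neg_distrib, sum_mul]; rw [sum_comm]

theorem Γ'_symm (hU : IsOpen U) (hg_symm : ∀ y ∈ U, ∀ a b, g y a b = g y b a) (hx : x ∈ U)
    (c a b : Fin n) : Γ' g c a b x = Γ' g c b a x := by
  unfold Γ'
  congr 1
  refine sum_congr rfl fun d _ => ?_
  rw [pd_congr_of_eqOn hU (fun y hy => hg_symm y hy a b) hx d]
  ring

theorem contDiffOn_Γ' (hU : IsOpen U) (hg_smooth : ∀ a b, ContDiffOn ℝ ∞ (fun y => g y a b) U)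
    (hg_inv : ∀ y ∈ U, IsUnit (Matrix.of (g y)).det) (c a b : Fin n) :
    ContDiffOn ℝ ∞ (Γ' g c a b) U :=
  contDiffOn_const.mul <| ContDiffOn.sum fun d _ => (contDiffOn_ginv hg_smooth hg_inv c d).mul
    (((contDiffOn_pd hU (hg_smooth b d) a).add (contDiffOn_pd hU (hg_smooth a d) b)).sub
      (contDiffOn_pd hU (hg_smooth a b) d))

theorem contDiffOn_Ricci (hU : IsOpen U) (hg_smooth : ∀ a b, ContDiffOn ℝ ∞ (fun y => g y a b) U)
    (hg_inv : ∀ y ∈ U, IsUnit (Matrix.of (g y)).det) (a c : Fin n) :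
    ContDiffOn ℝ ∞ (Ricci g a c) U := by
  have hΓ := contDiffOn_Γ' hU hg_smooth hg_inv
  exact ContDiffOn.sum fun b _ =>
    (((contDiffOn_pd hU (hΓ b a c) b).sub (contDiffOn_pd hU (hΓ b b c) a)).add
      (ContDiffOn.sum fun e _ => (hΓ e a c).mul (hΓ b b e))).sub
      (ContDiffOn.sum fun e _ => (hΓ e b c).mul (hΓ b a e))

theorem sum_Γ'_self (hU : IsOpen U) (hg_symm : ∀ y ∈ U, ∀ a b, g y a b = g y b a) (hx : x ∈ U)
    (c : Fin n) :
    ∑ b, Γ' g b b c x = (1 / 2) * ∑ b, ∑ d, ginv g x b d * pd c (fun y => g y b d) x := by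
  have hcancel : ∑ b, ∑ d, ginv g x b d * pd b (fun y => g y c d) x
      = ∑ b, ∑ d, ginv g x b d * pd d (fun y => g y b c) x := by
    rw [sum_comm]
    refine sum_congr rfl fun b _ => sum_congr rfl fun d _ => ?_
    rw [ginv_symm (hg_symm x hx) d b, pd_congr_of_eqOn hU (fun y hy => hg_symm y hy c b) hx d]
  simp only [Γ', ← mul_sum, mul_add, mul_sub, sum_add_distrib, sum_sub_distrib, hcancel]
  ring

theorem pd_sum_Γ'_self_comm (hU : IsOpen U)
    (hg_smooth : ∀ a b, ContDiffOn ℝ ∞ (fun y => g y a b) U)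
    (hg_symm : ∀ y ∈ U, ∀ a b, g y a b = g y b a)
    (hg_inv : ∀ y ∈ U, IsUnit (Matrix.of (g y)).det) (hx : x ∈ U) (a c : Fin n) :
    pd a (fun y => ∑ b, Γ' g b b c y) x = pd c (fun y => ∑ b, Γ' g b b a y) x := by
  have dginv : ∀ b d, DifferentiableAt ℝ (fun y => ginv g y b d) x :=
    fun b d => (contDiffOn_ginv hg_smooth hg_inv b d).differentiableAt_of_isOpen hU hx
  have dpdg : ∀ e b d, DifferentiableAt ℝ (pd e fun y => g y b d) x :=
    fun e b d => (contDiffOn_pd hU (hg_smooth b d) e).differentiableAt_of_isOpen hU hx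
  have hexpand : ∀ e e', pd e (fun y => ∑ b, Γ' g b b e' y) x
      = (1 / 2) * ∑ b, ∑ d, (-∑ p, ∑ q, ginv g x b p * pd e (fun y => g y p q) x
            * ginv g x q d * pd e' (fun y => g y b d) x
          + ginv g x b d * pd e (pd e' fun y => g y b d) x) := by
    intro e e'
    rw [pd_congr_of_eqOn hU (fun y hy => sum_Γ'_self hU hg_symm hy e') hx e,
      pd_const_mul _ (.fun_sum fun b _ => .fun_sum fun d _ => (dginv b d).fun_mul (dpdg e' b d)),
      pd_sum _ _ fun b _ => .fun_sum fun d _ => (dginv b d).fun_mul (dpdg e' b d)]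
    congr 1
    refine sum_congr rfl fun b _ => ?_
    rw [pd_sum _ _ fun d _ => (dginv b d).fun_mul (dpdg e' b d)]
    refine sum_congr rfl fun d _ => ?_
    rw [pd_mul (dginv b d) (dpdg e' b d), pd_ginv hU hg_smooth hg_inv hx, neg_mul, sum_mul]
    simp only [sum_mul]
  -- the first-order part is `-tr(g⁻¹ ∂_a g g⁻¹ ∂_c g)`, symmetric after swapping `(b,d) ↔ (p,q)`
  have hswap : ∀ F : Fin n → Fin n → Fin n → Fin n → ℝ,
      ∑ b, ∑ d, ∑ p, ∑ q, F b d p q = ∑ b, ∑ d, ∑ p, ∑ q, F p q b d := fun F => by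
    simpa [Fintype.sum_prod_type] using
      sum_comm (s := univ) (t := univ) (f := fun i j : Fin n × Fin n => (F i.1 i.2 j.1 j.2 : ℝ))
  rw [hexpand, hexpand]
  simp only [sum_add_distrib, sum_neg_distrib, pd_pd_comm hU (hg_smooth _ _) hx a c]
  rw [hswap]
  congr 3
  refine sum_congr rfl fun b _ => sum_congr rfl fun d _ =>
    sum_congr rfl fun p _ => sum_congr rfl fun q _ => ?_
  rw [ginv_symm (hg_symm x hx) p b, ginv_symm (hg_symm x hx) d q]
  ring

theorem Ricci_symm (hU : IsOpen U) (hg_smooth : ∀ a b, ContDiffOn ℝ ∞ (fun y => g y a b) U)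
    (hg_symm : ∀ y ∈ U, ∀ a b, g y a b = g y b a)
    (hg_inv : ∀ y ∈ U, IsUnit (Matrix.of (g y)).det) (hx : x ∈ U) (a c : Fin n) :
    Ricci g a c x = Ricci g c a x := by
  have hΓ := Γ'_symm hU hg_symm hx
  have dΓ : ∀ e a b, DifferentiableAt ℝ (Γ' g e a b) x :=
    fun e a b => (contDiffOn_Γ' hU hg_smooth hg_inv e a b).differentiableAt_of_isOpen hU hx
  have h₁ : ∑ b, pd b (Γ' g b a c) x = ∑ b, pd b (Γ' g b c a) x :=
    sum_congr rfl fun b _ => pd_congr_of_eqOn hU (fun y hy => Γ'_symm hU hg_symm hy b a c) hx b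
  have h₂ : ∑ b, pd a (Γ' g b b c) x = ∑ b, pd c (Γ' g b b a) x := by
    rw [← pd_sum _ _ fun b _ => dΓ b b c, ← pd_sum _ _ fun b _ => dΓ b b a]
    exact pd_sum_Γ'_self_comm hU hg_smooth hg_symm hg_inv hx a c
  have h₃ : ∑ b, ∑ e, Γ' g e a c x * Γ' g b b e x = ∑ b, ∑ e, Γ' g e c a x * Γ' g b b e x := by
    simp only [hΓ _ a c]
  have h₄ : ∑ b, ∑ e, Γ' g e b c x * Γ' g b a e x = ∑ b, ∑ e, Γ' g e b a x * Γ' g b c e x := by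
    rw [sum_comm]
    refine sum_congr rfl fun b _ => sum_congr rfl fun e _ => ?_
    rw [hΓ b e c, hΓ e a b, hΓ b c e, hΓ e b a]
    ring
  simp only [Ricci, Riem, sum_add_distrib, sum_sub_distrib, h₁, h₂, h₃, h₄]

end Curvature

noncomputable section LieDerivative

variable {n : ℕ} {U : Set (Fin n → ℝ)} (g : (Fin n → ℝ) → Fin n → Fin n → ℝ) {x : Fin n → ℝ}

def cdVec (V : Fin n → (Fin n → ℝ) → ℝ) (a c : Fin n) (x : Fin n → ℝ) : ℝ :=
  pd a (V c) x + ∑ e, Γ' g c a e x * V e x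

def lie2 (V : Fin n → (Fin n → ℝ) → ℝ) (u : Fin n → Fin n → (Fin n → ℝ) → ℝ) (a b : Fin n)
    (x : Fin n → ℝ) : ℝ :=
  ∑ c, V c x * pd c (u a b) x + ∑ c, u c b x * pd a (V c) x + ∑ c, u a c x * pd b (V c) x

variable {g}

theorem lie2_eq_cd2 (hΓ : ∀ c a b, Γ' g c a b x = Γ' g c b a x)
    (V : Fin n → (Fin n → ℝ) → ℝ) (u : Fin n → Fin n → (Fin n → ℝ) → ℝ) (a b : Fin n) :
    lie2 V u a b x = ∑ e, cd2 g u e a b x * V e x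
      + ∑ c, u c b x * cdVec g V a c x + ∑ c, u a c x * cdVec g V b c x := by
  have hcancel : ∀ (w : Fin n → ℝ) (a : Fin n), ∑ e, (∑ d, Γ' g d e a x * w d) * V e x
      = ∑ c, w c * ∑ e, Γ' g c a e x * V e x := fun w a => by
    simp only [sum_mul, mul_sum]
    rw [sum_comm]
    exact sum_congr rfl fun c _ => sum_congr rfl fun e _ => by rw [hΓ]; ring
  simp only [lie2, cd2, cdVec, sub_mul, mul_add, sum_add_distrib, sum_sub_distrib,
    hcancel (u · b x), hcancel (u a · x)]
  simp only [mul_comm (V _ x)]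
  ring

theorem cd1_congr (hU : IsOpen U) {w w' : Fin n → (Fin n → ℝ) → ℝ}
    (hw : ∀ b, Set.EqOn (w b) (w' b) U) (hx : x ∈ U) (a b : Fin n) :
    cd1 g w a b x = cd1 g w' a b x := by
  simp only [cd1, pd_congr_of_eqOn hU (hw b) hx, hw _ hx]

theorem cd1_sum_mul {u : Fin n → Fin n → (Fin n → ℝ) → ℝ} {V : Fin n → (Fin n → ℝ) → ℝ}
    (hu : ∀ b e, DifferentiableAt ℝ (u b e) x) (hV : ∀ e, DifferentiableAt ℝ (V e) x)
    (a b : Fin n) :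
    cd1 g (fun b y => ∑ e, u b e y * V e y) a b x
      = ∑ e, cd2 g u a b e x * V e x + ∑ d, u b d x * cdVec g V a d x := by
  have hΓu : ∑ c, Γ' g c a b x * ∑ e, u c e x * V e x
      = ∑ e, (∑ d, Γ' g d a b x * u d e x) * V e x := by
    simp only [sum_mul, mul_sum]
    rw [sum_comm]
    exact sum_congr rfl fun c _ => sum_congr rfl fun e _ => by ring
  have hΓV : ∑ e, (∑ d, Γ' g d a e x * u b d x) * V e x
      = ∑ d, u b d x * ∑ e, Γ' g d a e x * V e x := by
    simp only [sum_mul, mul_sum]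
    rw [sum_comm]
    exact sum_congr rfl fun c _ => sum_congr rfl fun e _ => by ring
  simp only [cd1, pd_sum _ _ fun e _ => (hu b e).fun_mul (hV e), pd_mul (hu b _) (hV _), cd2,
    cdVec, sub_mul, mul_add, sum_add_distrib, sum_sub_distrib, hΓu, hΓV]
  ring

theorem ricSharp_eq_sum_Ricci_mul {y : Fin n → ℝ} (hsymm : ∀ a b, g y a b = g y b a)
    (hdet : IsUnit (Matrix.of (g y)).det) (V : Fin n → (Fin n → ℝ) → ℝ) (a : Fin n) :
    ricSharp g V a y = ∑ d, Ricci g a d y * V d y := by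
  calc ricSharp g V a y
      = ∑ d, ∑ e, (∑ b, g y e b * ginv g y b d) * (Ricci g a d y * V e y) := by
        simp only [ricSharp, RicciUp, low, sum_mul, mul_sum]
        refine sum_comm.trans <| (sum_congr rfl fun e _ => sum_comm).trans <| sum_comm.trans <|
          sum_congr rfl fun d _ => sum_congr rfl fun e _ => sum_congr rfl fun b _ => ?_
        rw [hsymm b e]; ring
    _ = ∑ d, Ricci g a d y * V d y := by
        simp [sum_mul_ginv hdet, ite_mul]

end LieDerivative

theorem lieRic_identity_general {n : ℕ}
    (U : Set (Fin n → ℝ)) (hU : IsOpen U)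
    (g : (Fin n → ℝ) → Fin n → Fin n → ℝ)
    (hg_smooth : ∀ a b : Fin n, ContDiffOn ℝ ∞ (fun x => g x a b) U)
    (hg_symm : ∀ x ∈ U, ∀ a b : Fin n, g x a b = g x b a)
    (hg_inv : ∀ x ∈ U, IsUnit (Matrix.of (g x)).det)
    (V : Fin n → (Fin n → ℝ) → ℝ)
    (hV : ∀ a : Fin n, ContDiffOn ℝ ∞ (V a) U) :
    ∀ x ∈ U, ∀ a b : Fin n,
      lieRic g V a b x
        = (∑ e, (cd2 g (Ricci g) e a b x - cd2 g (Ricci g) a b e x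
              - cd2 g (Ricci g) b a e x) * V e x)
          + lieSharpG g (ricSharp g V) a b x := by
  intro x hx a b
  have dRic : ∀ p q, DifferentiableAt ℝ (Ricci g p q) x := fun p q =>
    (contDiffOn_Ricci hU hg_smooth hg_inv p q).differentiableAt_of_isOpen hU hx
  have hW : ∀ p q, cd1 g (ricSharp g V) p q x
      = ∑ e, cd2 g (Ricci g) p q e x * V e x + ∑ d, Ricci g q d x * cdVec g V p d x := by
    intro p q
    rw [cd1_congr hU (fun q y hy => ricSharp_eq_sum_Ricci_mul (hg_symm y hy) (hg_inv y hy) V q) hx,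
      cd1_sum_mul dRic fun e => (hV e).differentiableAt_of_isOpen hU hx]
  have hRic : ∑ c, Ricci g c b x * cdVec g V a c x = ∑ d, Ricci g b d x * cdVec g V a d x :=
    sum_congr rfl fun c _ => by rw [Ricci_symm hU hg_smooth hg_symm hg_inv hx]
  rw [show lieRic g V a b x = lie2 V (Ricci g) a b x from rfl,
    lie2_eq_cd2 (Γ'_symm hU hg_symm hx), lieSharpG, hW, hW, hRic]
  simp only [sub_mul, sum_sub_distrib]
  ring

/-- identity (A.5)/(eq: LRab) of the paper: for every smooth vector
field `V` on `U` and all indices `a`, `b`,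
`(ℒ_V Ric)_{ab} = (∇_e R_{ab} − ∇_a R_{be} − ∇_b R_{ae})·V^e + (ℒ_{Ric♯(V)♯} g)_{ab}`
holds at every point of `U`. -/
theorem lieRic_identity {n : ℕ} (hn : 1 ≤ n)
    (U : Set (Fin n → ℝ)) (hU : IsOpen U)
    (g : (Fin n → ℝ) → Fin n → Fin n → ℝ)
    (hg_smooth : ∀ a b : Fin n, ContDiffOn ℝ ∞ (fun x => g x a b) U)
    (hg_symm : ∀ x ∈ U, ∀ a b : Fin n, g x a b = g x b a)
    (hg_inv : ∀ x ∈ U, IsUnit (Matrix.of (g x)).det)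
    (V : Fin n → (Fin n → ℝ) → ℝ)
    (hV : ∀ a : Fin n, ContDiffOn ℝ ∞ (V a) U) :
    ∀ x ∈ U, ∀ a b : Fin n,
      lieRic g V a b x
        = (∑ e, (cd2 g (Ricci g) e a b x - cd2 g (Ricci g) a b e x
              - cd2 g (Ricci g) b a e x) * V e x)
          + lieSharpG g (ricSharp g V) a b x :=
  lieRic_identity_general U hU g hg_smooth hg_symm hg_inv V hV
end
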